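/- arXiv:2110.06332 — 3 statements merged into one kernel-verified Lean document; each statement's English description precedes it below -/
import Mathlib

section
/- Let Σ be a real symmetric positive semidefinite n × n matrix, H a real m × n matrix, and R a real symmetric positive definite m × m matrix. Define f(K) = tr(K R Kᵀ) + tr((I − K H) Σ (I − K H)ᵀ) for real n × m matrices K, and let K* = Σ Hᵀ (H Σ Hᵀ + R)⁻¹. Then for every K, f(K) = f(K*) + tr((K − K*)(H Σ Hᵀ + R)(K − K*)ᵀ); in particular f(K) ≥ f(K*) for all K, with equality if and only if K = K*. -/
open Matrix

/-- The Kalman gain `K* = Σ Hᵀ (H Σ Hᵀ + R)⁻¹` minimizes the trace of the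
Joseph-form posterior covariance
`f(K) = tr(K R Kᵀ) + tr((I − K H) Σ (I − K H)ᵀ)`; more precisely
`f(K) = f(K*) + tr((K − K*)(H Σ Hᵀ + R)(K − K*)ᵀ)`, so `f(K) ≥ f(K*)` with
equality iff `K = K*`. -/
theorem kalman_gain_optimal {n m : ℕ}
    (S : Matrix (Fin n) (Fin n) ℝ) (H : Matrix (Fin m) (Fin n) ℝ)
    (R : Matrix (Fin m) (Fin m) ℝ)
    (hS : S.PosSemidef) (hR : R.PosDef)
    (f : Matrix (Fin n) (Fin m) ℝ → ℝ)
    (hf : ∀ K, f K =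
      trace (K * R * Kᵀ) + trace ((1 - K * H) * S * (1 - K * H)ᵀ))
    (Kstar : Matrix (Fin n) (Fin m) ℝ)
    (hKstar : Kstar = S * Hᵀ * (H * S * Hᵀ + R)⁻¹) :
    ∀ K : Matrix (Fin n) (Fin m) ℝ,
      f K = f Kstar + trace ((K - Kstar) * (H * S * Hᵀ + R) * (K - Kstar)ᵀ) ∧
      f Kstar ≤ f K ∧
      (f K = f Kstar ↔ K = Kstar) := by
  intro K
  set A : Matrix (Fin m) (Fin m) ℝ := H * S * Hᵀ + R with hAdef
  have hSt : Sᵀ = S := by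
    have := hS.isHermitian.eq
    rwa [conjTranspose_eq_transpose_of_trivial] at this
  have hHSH : (H * S * Hᵀ).PosSemidef := by
    have := hS.mul_mul_conjTranspose_same H
    rwa [conjTranspose_eq_transpose_of_trivial] at this
  have hApos : A.PosDef := Matrix.PosDef.posSemidef_add hHSH hR
  have hAt : Aᵀ = A := by
    have := hApos.isHermitian.eq
    rwa [conjTranspose_eq_transpose_of_trivial] at this
  have hAunit : IsUnit A.det := by
    rw [isUnit_iff_ne_zero]
    exact ne_of_gt hApos.det_pos
  have hKA : Kstar * A = S * Hᵀ := by
    rw [hKstar, Matrix.mul_assoc, Matrix.nonsing_inv_mul A hAunit, Matrix.mul_one]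
  -- cross-term lemmas
  have tr_tp : ∀ (X Y : Matrix (Fin n) (Fin m) ℝ),
      trace (X * A * Yᵀ) = trace (Y * A * Xᵀ) := by
    intro X Y
    rw [← trace_transpose (X * A * Yᵀ)]
    simp [Matrix.transpose_mul, hAt, Matrix.mul_assoc]
  have cross : ∀ (X : Matrix (Fin n) (Fin m) ℝ),
      trace (Kstar * A * Xᵀ) = trace (X * H * S) := by
    intro X
    rw [hKA, ← trace_transpose (S * Hᵀ * Xᵀ)]
    simp [Matrix.transpose_mul, hSt, Matrix.mul_assoc]
  -- expansion of f
  have expand : ∀ (X : Matrix (Fin n) (Fin m) ℝ),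
      f X = trace S + trace (X * A * Xᵀ) - 2 * trace (X * H * S) := by
    intro X
    rw [hf]
    have h1 : ((1 : Matrix (Fin n) (Fin n) ℝ) - X * H)ᵀ = 1 - Hᵀ * Xᵀ := by
      simp [Matrix.transpose_sub, Matrix.transpose_mul]
    rw [h1]
    have h2 : ((1 : Matrix (Fin n) (Fin n) ℝ) - X * H) * S * (1 - Hᵀ * Xᵀ)
        = S - X * H * S - S * (Hᵀ * Xᵀ) + X * H * S * (Hᵀ * Xᵀ) := by
      simp only [Matrix.sub_mul, Matrix.mul_sub, Matrix.one_mul, Matrix.mul_one,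
        Matrix.mul_assoc]
      abel
    rw [h2]
    have h3 : trace (S * (Hᵀ * Xᵀ)) = trace (X * H * S) := by
      rw [← trace_transpose (S * (Hᵀ * Xᵀ))]
      simp [Matrix.transpose_mul, hSt, Matrix.mul_assoc]
    have h4 : X * A * Xᵀ = X * H * S * (Hᵀ * Xᵀ) + X * R * Xᵀ := by
      rw [hAdef]
      simp only [Matrix.mul_add, Matrix.add_mul, Matrix.mul_assoc]
    rw [h4]
    simp only [trace_sub, trace_add, h3]
    ring
  -- the main identity
  have gexp : trace ((K - Kstar) * A * (K - Kstar)ᵀ)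
      = trace (K * A * Kᵀ) - 2 * trace (K * H * S) + trace (Kstar * A * Kstarᵀ) := by
    have h5 : (K - Kstar) * A * (K - Kstar)ᵀ
        = K * A * Kᵀ - K * A * Kstarᵀ - Kstar * A * Kᵀ + Kstar * A * Kstarᵀ := by
      rw [Matrix.transpose_sub]
      simp only [Matrix.sub_mul, Matrix.mul_sub]
      abel
    rw [h5]
    simp only [trace_sub, trace_add]
    rw [tr_tp K Kstar, cross K]
    ring
  have hfK : f Kstar = trace S - trace (Kstar * A * Kstarᵀ) := by
    rw [expand Kstar, ← cross Kstar]
    ring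
  have main : f K = f Kstar + trace ((K - Kstar) * A * (K - Kstar)ᵀ) := by
    rw [expand K, hfK, gexp]; ring
  -- nonnegativity of the trace term
  have hPSD : ((K - Kstar) * A * (K - Kstar)ᵀ).PosSemidef := by
    have := hApos.posSemidef.mul_mul_conjTranspose_same (K - Kstar)
    rwa [conjTranspose_eq_transpose_of_trivial] at this
  have diag_eq : ∀ (D : Matrix (Fin n) (Fin m) ℝ) (i : Fin n),
      (D * A * Dᵀ) i i = (D i) ⬝ᵥ (A *ᵥ (D i)) := by
    intro D i
    simp only [Matrix.mul_apply, Matrix.mulVec, dotProduct, Matrix.transpose_apply,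
      Finset.sum_mul, Finset.mul_sum]
    rw [Finset.sum_comm]
    exact Finset.sum_congr rfl fun a _ => Finset.sum_congr rfl fun b _ => by ring
  have tr_nonneg : 0 ≤ trace ((K - Kstar) * A * (K - Kstar)ᵀ) := by
    rw [Matrix.trace]
    apply Finset.sum_nonneg
    intro i _
    have := hPSD.diag_nonneg (i := i)
    simpa [Matrix.diag] using hPSD.diag_nonneg (i := i)
  have tr_zero_iff : trace ((K - Kstar) * A * (K - Kstar)ᵀ) = 0 → K = Kstar := by
    intro h0
    by_contra hne
    have hD : K - Kstar ≠ 0 := sub_ne_zero.mpr hne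
    obtain ⟨i, j, hij⟩ : ∃ i j, (K - Kstar) i j ≠ 0 := by
      by_contra hc
      push_neg at hc
      exact hD (by ext i j; simpa using hc i j)
    have hrow : (K - Kstar) i ≠ 0 := by
      intro h; exact hij (by rw [h]; rfl)
    have hpos : 0 < ((K - Kstar) * A * (K - Kstar)ᵀ) i i := by
      rw [diag_eq]
      have := hApos.dotProduct_mulVec_pos hrow
      simpa using this
    have hd : ∀ k, 0 ≤ ((K - Kstar) * A * (K - Kstar)ᵀ) k k := by
      intro k
      simpa [Matrix.diag] using hPSD.diag_nonneg (i := k)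
    have : ((K - Kstar) * A * (K - Kstar)ᵀ) i i = 0 := by
      have := (Finset.sum_eq_zero_iff_of_nonneg (fun k _ => hd k)).mp h0
      exact this i (Finset.mem_univ i)
    linarith
  refine ⟨main, by linarith, ?_⟩
  constructor
  · intro h
    apply tr_zero_iff
    linarith [main]
  · intro h; rw [h]
end

section
/- Let the index set {1, ..., N} induce a block partition, and for each i let H_i be an m_i × n_i real matrix, R_i a real symmetric positive definite m_i × m_i matrix, and let H = bdiag(H_1, ..., H_N), R = bdiag(R_1, ..., R_N). Let Σ be a real symmetric positive semidefinite matrix of size (∑ n_i) × (∑ n_i), partitioned conformally, with diagonal blocks Σ_ii. Then for every block diagonal matrix K = bdiag(K_1, ..., K_N) with K_i of size n_i × m_i, the objective tr(K R Kᵀ) + tr((I − K H) Σ (I − K H)ᵀ) equals ∑_{i=1}^{N} [ tr(K_i R_i K_iᵀ) + tr((I_i − K_i H_i) Σ_ii (I_i − K_i H_i)ᵀ) ], where I_i is the n_i × n_i identity matrix. -/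
open Matrix

lemma aux_trace {ι : Type*} [Fintype ι] [DecidableEq ι]
    {n : ι → Type*} [∀ i, Fintype (n i)] [∀ i, DecidableEq (n i)]
    (B : ∀ i, Matrix (n i) (n i) ℝ) (S : Matrix (Σ i, n i) (Σ i, n i) ℝ) :
    trace (blockDiagonal' B * S * (blockDiagonal' B)ᵀ) =
      ∑ i, trace (B i * S.submatrix (Sigma.mk i) (Sigma.mk i) * (B i)ᵀ) := by
  rw [trace, ← Finset.univ_sigma_univ, Finset.sum_sigma]
  refine Finset.sum_congr rfl fun i _ => ?_
  rw [trace]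
  refine Finset.sum_congr rfl fun a _ => ?_
  simp only [diag, mul_apply, transpose_apply, blockDiagonal'_apply, submatrix_apply,
    Finset.sum_sigma']
  simp only [← Finset.univ_sigma_univ, Finset.sum_sigma, dite_mul, zero_mul,
    Finset.sum_dite_irrel, Finset.sum_const_zero, Finset.sum_dite_eq, Finset.sum_dite_eq',
    mul_dite, mul_zero, Finset.mem_univ, if_true, cast_eq]

/-- For block diagonal `H = bdiag(Hᵢ)`, `R = bdiag(Rᵢ)` and any block diagonal
gain `K = bdiag(Kᵢ)`, the Kalman objective
`tr(K R Kᵀ) + tr((I − K H) Σ (I − K H)ᵀ)` decouples into the sum of the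
per-block objectives `tr(Kᵢ Rᵢ Kᵢᵀ) + tr((Iᵢ − Kᵢ Hᵢ) Σᵢᵢ (Iᵢ − Kᵢ Hᵢ)ᵀ)`. -/
theorem kalman_objective_blockDiagonal_decouples
    {ι : Type*} [Fintype ι] [DecidableEq ι]
    {m n : ι → Type*} [∀ i, Fintype (m i)] [∀ i, Fintype (n i)]
    [∀ i, DecidableEq (m i)] [∀ i, DecidableEq (n i)]
    (H : ∀ i, Matrix (m i) (n i) ℝ)
    (R : ∀ i, Matrix (m i) (m i) ℝ) (hR : ∀ i, (R i).PosDef)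
    (S : Matrix (Σ i, n i) (Σ i, n i) ℝ) (hS : S.PosSemidef)
    (K : ∀ i, Matrix (n i) (m i) ℝ) :
    trace (blockDiagonal' K * blockDiagonal' R * (blockDiagonal' K)ᵀ) +
      trace ((1 - blockDiagonal' K * blockDiagonal' H) * S *
        (1 - blockDiagonal' K * blockDiagonal' H)ᵀ) =
    ∑ i, (trace (K i * R i * (K i)ᵀ) +
      trace ((1 - K i * H i) * S.submatrix (Sigma.mk i) (Sigma.mk i) *
        (1 - K i * H i)ᵀ)) := by
  have h1 : (1 : Matrix (Σ i, n i) (Σ i, n i) ℝ) - blockDiagonal' K * blockDiagonal' H =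
      blockDiagonal' (fun i => 1 - K i * H i) := by
    rw [← blockDiagonal'_mul, ← blockDiagonal'_one, ← blockDiagonal'_sub]; rfl
  rw [h1, aux_trace, blockDiagonal'_transpose, ← blockDiagonal'_mul, ← blockDiagonal'_mul,
    trace_blockDiagonal', Finset.sum_add_distrib]
end

section
/- Let the index set {1, ..., N} induce a block partition, and for each i let H_i be an m_i × n_i real matrix and R_i a real symmetric positive definite m_i × m_i matrix; set H = bdiag(H_1, ..., H_N) and R = bdiag(R_1, ..., R_N). Let Σ be a real symmetric positive semidefinite (∑ n_i) × (∑ n_i) matrix partitioned conformally with diagonal blocks Σ_ii. Then the minimum of tr(K R Kᵀ) + tr((I − K H) Σ (I − K H)ᵀ) over all block diagonal matrices K = bdiag(K_1, ..., K_N) (with K_i of size n_i × m_i) is attained at the block diagonal matrix whose i-th block is K_i* = Σ_ii H_iᵀ (H_i Σ_ii H_iᵀ + R_i)⁻¹; i.e., for every block diagonal K, tr(K R Kᵀ) + tr((I − K H) Σ (I − K H)ᵀ) ≥ tr(K* R K*ᵀ) + tr((I − K* H) Σ (I − K* H)ᵀ) where K* = bdiag(K_1*, ..., K_N*). -/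
open Matrix

set_option linter.unusedSectionVars false

section KalmanAux

private lemma trace_psd_nonneg' {α : Type*} [Fintype α] [DecidableEq α]
    {A : Matrix α α ℝ} (hA : A.PosSemidef) : 0 ≤ A.trace := by
  rw [Matrix.trace]
  refine Finset.sum_nonneg fun i _ => ?_
  exact hA.diag_nonneg

variable {ι : Type*} [Fintype ι] [DecidableEq ι]
  {m n p : ι → Type*} [∀ i, Fintype (m i)] [∀ i, Fintype (n i)] [∀ i, Fintype (p i)]
  [∀ i, DecidableEq (m i)] [∀ i, DecidableEq (n i)]

private lemma trace_bd_mul (D : ∀ i, Matrix (n i) (m i) ℝ)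
    (M : Matrix (Σ i, m i) (Σ i, n i) ℝ) :
    trace (blockDiagonal' D * M) =
      ∑ i, trace (D i * M.submatrix (Sigma.mk i) (Sigma.mk i)) := by
  calc trace (blockDiagonal' D * M)
      = ∑ i, ∑ a, ∑ j, ∑ b, blockDiagonal' D ⟨i,a⟩ ⟨j,b⟩ * M ⟨j,b⟩ ⟨i,a⟩ := by
        rw [Matrix.trace, ← Finset.univ_sigma_univ, Finset.sum_sigma]
        simp [Matrix.mul_apply, ← Finset.univ_sigma_univ, Finset.sum_sigma, Matrix.diag]
    _ = ∑ i, ∑ a, ∑ b, D i a b * M ⟨i,b⟩ ⟨i,a⟩ := by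
        refine Finset.sum_congr rfl fun i _ => Finset.sum_congr rfl fun a _ => ?_
        rw [Fintype.sum_eq_single i]
        · simp [blockDiagonal'_apply_eq]
        · intro j hj
          simp [blockDiagonal'_apply_ne _ _ _ (Ne.symm hj)]
    _ = _ := by simp [Matrix.trace, Matrix.mul_apply, Matrix.diag]

private lemma bd_submatrix (B : ∀ i, Matrix (m i) (n i) ℝ) (i : ι) :
    (blockDiagonal' B).submatrix (Sigma.mk i) (Sigma.mk i) = B i := by
  ext a b; simp [blockDiagonal'_apply_eq]

private lemma mul_bd_submatrix (A : Matrix (Σ i, p i) (Σ i, m i) ℝ)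
    (B : ∀ i, Matrix (m i) (n i) ℝ) (i : ι) :
    (A * blockDiagonal' B).submatrix (Sigma.mk i) (Sigma.mk i) =
      A.submatrix (Sigma.mk i) (Sigma.mk i) * B i := by
  ext a c
  simp only [submatrix_apply, Matrix.mul_apply, ← Finset.univ_sigma_univ, Finset.sum_sigma]
  rw [Fintype.sum_eq_single i]
  · simp [blockDiagonal'_apply_eq]
  · intro j hj
    simp [blockDiagonal'_apply_ne _ _ _ hj]

private lemma bd_mul_submatrix (B : ∀ i, Matrix (m i) (n i) ℝ)
    (A : Matrix (Σ i, n i) (Σ i, p i) ℝ) (i : ι) :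
    (blockDiagonal' B * A).submatrix (Sigma.mk i) (Sigma.mk i) =
      B i * A.submatrix (Sigma.mk i) (Sigma.mk i) := by
  ext a c
  simp only [submatrix_apply, Matrix.mul_apply, ← Finset.univ_sigma_univ, Finset.sum_sigma]
  rw [Fintype.sum_eq_single i]
  · simp [blockDiagonal'_apply_eq]
  · intro j hj
    simp [blockDiagonal'_apply_ne _ _ _ hj.symm]

/-- Abstract trace inequality for quadratic Kalman-type objectives. -/
private lemma kalman_abstract {α β : Type*} [Fintype α] [Fintype β] [DecidableEq α]
    (S : Matrix α α ℝ) (hSt : Sᵀ = S)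
    (RB : Matrix β β ℝ) (HB : Matrix β α ℝ)
    (X Y : Matrix α β ℝ)
    (hPt : (RB + HB * S * HBᵀ)ᵀ = RB + HB * S * HBᵀ)
    (hC : trace ((X - Y) * ((RB + HB * S * HBᵀ) * Yᵀ)) = trace ((X - Y) * (HB * S)))
    (hpos1 : 0 ≤ trace ((X - Y) * RB * (X - Y)ᵀ))
    (hpos2 : 0 ≤ trace (((X - Y) * HB) * S * ((X - Y) * HB)ᵀ)) :
    trace (Y * RB * Yᵀ) + trace ((1 - Y * HB) * S * (1 - Y * HB)ᵀ) ≤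
      trace (X * RB * Xᵀ) + trace ((1 - X * HB) * S * (1 - X * HB)ᵀ) := by
  set P : Matrix β β ℝ := RB + HB * S * HBᵀ with hP
  set D : Matrix α β ℝ := X - Y with hD
  have expand : ∀ Z : Matrix α β ℝ,
      trace (Z * RB * Zᵀ) + trace ((1 - Z * HB) * S * (1 - Z * HB)ᵀ)
        = trace (Z * P * Zᵀ) - 2 * trace (Z * (HB * S)) + trace S := by
    intro Z
    have h1 : (1 - Z * HB) * S * (1 - Z * HB)ᵀ
        = S - Z * (HB * S) - S * (HBᵀ * Zᵀ) + Z * (HB * S * HBᵀ) * Zᵀ := by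
      rw [transpose_sub, transpose_one, transpose_mul]
      simp only [Matrix.sub_mul, Matrix.mul_sub, Matrix.one_mul, Matrix.mul_one,
        Matrix.mul_assoc]
      abel
    have h2 : trace (S * (HBᵀ * Zᵀ)) = trace (Z * (HB * S)) := by
      rw [← Matrix.trace_transpose (S * (HBᵀ * Zᵀ))]
      simp [transpose_mul, hSt, Matrix.mul_assoc]
    have h3 : Z * P * Zᵀ = Z * RB * Zᵀ + Z * (HB * S * HBᵀ) * Zᵀ := by
      rw [hP]; simp only [Matrix.mul_add, Matrix.add_mul]
    rw [h1, h3]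
    simp only [trace_add, trace_sub]
    rw [h2]
    ring
  have hDPX : trace (Y * P * Xᵀ) = trace (X * P * Yᵀ) := by
    rw [← Matrix.trace_transpose (Y * P * Xᵀ)]
    simp [transpose_mul, hPt, Matrix.mul_assoc]
  have hsq : trace (D * P * Dᵀ)
      = trace (X * P * Xᵀ) - trace (X * P * Yᵀ) - trace (Y * P * Xᵀ) + trace (Y * P * Yᵀ) := by
    rw [hD, transpose_sub]
    simp only [Matrix.sub_mul, Matrix.mul_sub, trace_sub]
    ring
  have hsplit : trace (D * P * Dᵀ)
      = trace (D * RB * Dᵀ) + trace ((D * HB) * S * (D * HB)ᵀ) := by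
    have h4 : (D * HB) * S * (D * HB)ᵀ = D * (HB * S * HBᵀ) * Dᵀ := by
      rw [transpose_mul]; simp only [Matrix.mul_assoc]
    have h3 : D * P * Dᵀ = D * RB * Dᵀ + D * (HB * S * HBᵀ) * Dᵀ := by
      rw [hP]; simp only [Matrix.mul_add, Matrix.add_mul]
    rw [h3, h4, trace_add]
  have hDS : trace (D * (HB * S)) = trace (X * (HB * S)) - trace (Y * (HB * S)) := by
    rw [hD, Matrix.sub_mul, trace_sub]
  have hDPY : trace (D * (P * Yᵀ)) = trace (X * P * Yᵀ) - trace (Y * P * Yᵀ) := by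
    rw [hD, Matrix.sub_mul, trace_sub, Matrix.mul_assoc, Matrix.mul_assoc]
  rw [expand X, expand Y]
  have hC' := hC
  rw [hDPY, hDS] at hC'
  rw [hsq] at hsplit
  have hpos : 0 ≤ trace (D * RB * Dᵀ) + trace ((D * HB) * S * (D * HB)ᵀ) :=
    add_nonneg hpos1 hpos2
  rw [← hsplit] at hpos
  rw [hDPX] at hpos
  linarith

end KalmanAux

/-- Theorem 1: for block diagonal `H = bdiag(Hᵢ)` and `R = bdiag(Rᵢ)`, the Kalman
objective `tr(K R Kᵀ) + tr((I − K H) Σ (I − K H)ᵀ)` over block diagonal gains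
`K = bdiag(Kᵢ)` is minimized by the block diagonal matrix `K*` with blocks
`Kᵢ* = Σᵢᵢ Hᵢᵀ (Hᵢ Σᵢᵢ Hᵢᵀ + Rᵢ)⁻¹`. -/
theorem optimal_blockDiagonal_kalman_gain
    {ι : Type*} [Fintype ι] [DecidableEq ι]
    {m n : ι → Type*} [∀ i, Fintype (m i)] [∀ i, Fintype (n i)]
    [∀ i, DecidableEq (m i)] [∀ i, DecidableEq (n i)]
    (H : ∀ i, Matrix (m i) (n i) ℝ)
    (R : ∀ i, Matrix (m i) (m i) ℝ) (hR : ∀ i, (R i).PosDef)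
    (S : Matrix (Σ i, n i) (Σ i, n i) ℝ) (hS : S.PosSemidef)
    (Kstar : ∀ i, Matrix (n i) (m i) ℝ)
    (hKstar : ∀ i, Kstar i =
      S.submatrix (Sigma.mk i) (Sigma.mk i) * (H i)ᵀ *
        (H i * S.submatrix (Sigma.mk i) (Sigma.mk i) * (H i)ᵀ + R i)⁻¹) :
    ∀ K : ∀ i, Matrix (n i) (m i) ℝ,
      trace (blockDiagonal' Kstar * blockDiagonal' R * (blockDiagonal' Kstar)ᵀ) +
        trace ((1 - blockDiagonal' Kstar * blockDiagonal' H) * S *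
          (1 - blockDiagonal' Kstar * blockDiagonal' H)ᵀ) ≤
      trace (blockDiagonal' K * blockDiagonal' R * (blockDiagonal' K)ᵀ) +
        trace ((1 - blockDiagonal' K * blockDiagonal' H) * S *
          (1 - blockDiagonal' K * blockDiagonal' H)ᵀ) := by
  intro K
  -- notation
  set Sii : ∀ i, Matrix (n i) (n i) ℝ :=
    fun i => S.submatrix (Sigma.mk i) (Sigma.mk i) with hSii
  set P : ∀ i, Matrix (m i) (m i) ℝ :=
    fun i => H i * Sii i * (H i)ᵀ + R i with hPdef
  have hSt : Sᵀ = S := by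
    have h := hS.1
    rwa [Matrix.IsHermitian, conjTranspose_eq_transpose_of_trivial] at h
  have hSiiPsd : ∀ i, (Sii i).PosSemidef := fun i => hS.submatrix _
  have hSiit : ∀ i, (Sii i)ᵀ = Sii i := by
    intro i
    have h := (hSiiPsd i).1
    rwa [Matrix.IsHermitian, conjTranspose_eq_transpose_of_trivial] at h
  have hRt : ∀ i, (R i)ᵀ = R i := by
    intro i
    have h := (hR i).1
    rwa [Matrix.IsHermitian, conjTranspose_eq_transpose_of_trivial] at h
  have hPiPd : ∀ i, (P i).PosDef := by
    intro i
    have h1 : (H i * Sii i * (H i)ᵀ).PosSemidef := by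
      rw [← conjTranspose_eq_transpose_of_trivial]
      exact (hSiiPsd i).mul_mul_conjTranspose_same (H i)
    exact Matrix.PosDef.posSemidef_add h1 (hR i)
  have hPit : ∀ i, (P i)ᵀ = P i := by
    intro i
    rw [hPdef]
    simp [transpose_add, transpose_mul, hRt i, hSiit i, Matrix.mul_assoc]
  -- the block optimality equation: P i * (Kstar i)ᵀ = H i * Sii i
  have hblock : ∀ i, P i * (Kstar i)ᵀ = H i * Sii i := by
    intro i
    have hdet : IsUnit (P i).det := (hPiPd i).det_pos.ne'.isUnit
    have hKt : (Kstar i)ᵀ = (P i)⁻¹ * (H i * Sii i) := by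
      rw [hKstar i]
      simp only [transpose_mul, transpose_nonsing_inv, transpose_transpose]
      rw [hPit i, hSiit i]
    rw [hKt, ← Matrix.mul_assoc, Matrix.mul_nonsing_inv _ hdet, Matrix.one_mul]
  -- difference blocks
  set D : ∀ i, Matrix (n i) (m i) ℝ := fun i => K i - Kstar i with hDdef
  have hDbd : blockDiagonal' K - blockDiagonal' Kstar = blockDiagonal' D := by
    rw [← blockDiagonal'_sub]; rfl
  -- apply the abstract lemma
  refine kalman_abstract S hSt (blockDiagonal' R) (blockDiagonal' H)
    (blockDiagonal' K) (blockDiagonal' Kstar) ?_ ?_ ?_ ?_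
  · -- symmetry of RB + HB S HBᵀ
    have h1 : (blockDiagonal' R)ᵀ = blockDiagonal' R := by
      rw [blockDiagonal'_transpose, funext hRt]
    simp [transpose_add, transpose_mul, h1, hSt, transpose_transpose, Matrix.mul_assoc]
  · -- the trace identity hC
    rw [hDbd]
    have hKsT : (blockDiagonal' Kstar)ᵀ = blockDiagonal' (fun i => (Kstar i)ᵀ) :=
      blockDiagonal'_transpose Kstar
    have hHT : (blockDiagonal' H)ᵀ = blockDiagonal' (fun i => (H i)ᵀ) :=
      blockDiagonal'_transpose H
    rw [hKsT, trace_bd_mul, trace_bd_mul]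
    refine Finset.sum_congr rfl fun i _ => ?_
    congr 1
    rw [mul_bd_submatrix]
    have hMii : ((blockDiagonal' R + blockDiagonal' H * S * (blockDiagonal' H)ᵀ)).submatrix
        (Sigma.mk i) (Sigma.mk i) = R i + H i * Sii i * (H i)ᵀ := by
      have : ∀ (A B : Matrix (Σ i, m i) (Σ i, m i) ℝ),
          (A + B).submatrix (Sigma.mk i) (Sigma.mk i) =
            A.submatrix (Sigma.mk i) (Sigma.mk i) + B.submatrix (Sigma.mk i) (Sigma.mk i) := by
        intro A B; ext a b; simp
      rw [this, bd_submatrix, hHT, mul_bd_submatrix, bd_mul_submatrix]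
    rw [hMii, bd_mul_submatrix]
    have hPe : R i + H i * Sii i * (H i)ᵀ = P i := add_comm _ _
    rw [hPe, hblock i]
  · -- positivity 1
    rw [hDbd]
    have h1 : blockDiagonal' D * blockDiagonal' R * (blockDiagonal' D)ᵀ
        = blockDiagonal' (fun i => D i * R i * (D i)ᵀ) := by
      rw [blockDiagonal'_transpose, ← blockDiagonal'_mul, ← blockDiagonal'_mul]
    rw [h1, trace_blockDiagonal']
    refine Finset.sum_nonneg fun i _ => ?_
    refine trace_psd_nonneg' ?_
    have := (hR i).posSemidef.mul_mul_conjTranspose_same (D i)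
    rwa [conjTranspose_eq_transpose_of_trivial] at this
  · -- positivity 2
    refine trace_psd_nonneg' ?_
    have := hS.mul_mul_conjTranspose_same
      ((blockDiagonal' K - blockDiagonal' Kstar) * blockDiagonal' H)
    rwa [conjTranspose_eq_transpose_of_trivial] at this
end
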